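/- If Δ is a Gorenstein* simplicial complex on [n] of dimension d-1, then for every R ⊆ [n] with p + |R| = d - 1 and p ≤ d - 2, H̃_p(Δ_{-R}) = 0; in particular Δ is 2-Cohen-Macaulay. -/

import Mathlib

/-!
Deleting a vertex `x` from a complex `Γ` is governed by the exact sequence
`H̃_{p+1}(Γ) → H̃_p(lk_Γ x) → H̃_p(Γ - x) → H̃_p(Γ)`, realised on chains by contracting at `x`
and coning from `x`. Remove the vertices of `R` one at a time and induct on `|R|`, using that
links of a Gorenstein* complex are Gorenstein*: for `p + |R| ≤ d - 2` both neighbours of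
`H̃_p(Γ - x)` vanish, and on the line `p + |R| = d - 1` the induction stays on the line until
`|R| = 1`, `p = d - 2`. There `H̃_p(lk x) ≅ k`, and the connecting map is onto: the link of a
ridge has two vertices, so by strong connectivity a nonzero top cycle of `Δ` is nonzero on
every facet, and its contraction at `x` is a nonzero top cycle of `lk x`.
-/

open Finset

namespace SCx

variable (k : Type) [Field k] {n : ℕ}

/-- An (abstract) simplicial complex on the vertex set `Fin n`:
a set of finsets closed under taking subsets. -/
def IsComplex (Δ : Set (Finset (Fin n))) : Prop :=
  ∀ F ∈ Δ, ∀ G ⊆ F, G ∈ Δ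

/-- Simplicial `p`-chains with coefficients in `k`: functions on the faces of
cardinality `p+1`. -/
abbrev Chains (Δ : Set (Finset (Fin n))) (p : ℤ) : Type :=
  {F : Finset (Fin n) // F ∈ Δ ∧ (F.card : ℤ) = p + 1} → k

open Classical in
/-- The underlying function of the simplicial boundary map, written via its
transpose formula:
`(∂ f) G = ∑_{x : insert x G ∈ Δ} (-1)^{pos of x in insert x G} f (insert x G)`. -/
noncomputable def boundaryFun (Δ : Set (Finset (Fin n))) (p : ℤ)
    (f : Chains k Δ p) : Chains k Δ (p - 1) := fun G => ∑ x : Fin n,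
  if h : x ∉ G.1 ∧ insert x G.1 ∈ Δ then
    (-1 : k) ^ (G.1.filter (fun y => y < x)).card *
      f ⟨insert x G.1, h.2, by
        have hc := G.2.2
        rw [Finset.card_insert_of_notMem h.1]
        push_cast at hc ⊢
        omega⟩
  else 0

/-- The simplicial boundary map. -/
noncomputable def boundary (Δ : Set (Finset (Fin n))) (p : ℤ) :
    Chains k Δ p →ₗ[k] Chains k Δ (p - 1) where
  toFun := boundaryFun k Δ p
  map_add' f g := by
    funext G
    unfold boundaryFun
    rw [Pi.add_apply]
    rw [← Finset.sum_add_distrib]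
    refine Finset.sum_congr rfl fun x _ => ?_
    split_ifs with h
    · rw [Pi.add_apply]; ring
    · rw [add_zero]
  map_smul' c f := by
    funext G
    unfold boundaryFun
    simp only [RingHom.id_apply, Pi.smul_apply, smul_eq_mul, Finset.mul_sum]
    refine Finset.sum_congr rfl fun x _ => ?_
    split_ifs with h
    · ring
    · rw [mul_zero]

/-- Transport of chains along an equality of degrees. -/
noncomputable def chainsCongr (Δ : Set (Finset (Fin n))) {p q : ℤ} (h : p = q) :
    Chains k Δ p ≃ₗ[k] Chains k Δ q := by
  subst h; exact LinearEquiv.refl k _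

noncomputable def cycles (Δ : Set (Finset (Fin n))) (p : ℤ) : Submodule k (Chains k Δ p) :=
  LinearMap.ker (boundary k Δ p)

noncomputable def boundaries (Δ : Set (Finset (Fin n))) (p : ℤ) : Submodule k (Chains k Δ p) :=
  LinearMap.range ((chainsCongr k Δ (show p + 1 - 1 = p by ring)).toLinearMap ∘ₗ
    boundary k Δ (p + 1))

/-- Reduced simplicial homology of `Δ` in degree `p`, with coefficients in the field `k`,
defined as cycles modulo (boundaries intersected with cycles).  With this convention
`H̃_{-1}({∅}) = k`. -/
abbrev ReducedHomology (Δ : Set (Finset (Fin n))) (p : ℤ) :=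
  ↥(cycles k Δ p) ⧸ (Submodule.comap (cycles k Δ p).subtype (boundaries k Δ p))

/-- The Alexander dual of `Δ`. -/
def dual (Δ : Set (Finset (Fin n))) : Set (Finset (Fin n)) := {F | Fᶜ ∉ Δ}

/-- The restriction `Δ_R` of `Δ` to a vertex subset `R`. -/
def restrict (Δ : Set (Finset (Fin n))) (R : Finset (Fin n)) : Set (Finset (Fin n)) :=
  {F | F ∈ Δ ∧ F ⊆ R}

/-- The link `lk_Δ S`. -/
def link (Δ : Set (Finset (Fin n))) (S : Finset (Fin n)) : Set (Finset (Fin n)) :=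
  {F | Disjoint F S ∧ F ∪ S ∈ Δ}

/-- `Δ_R^{S,T} = {F ⊆ R : F ∪ S ∈ Δ}` (for `T` the complement of `R ∪ S`). -/
def sub (Δ : Set (Finset (Fin n))) (R S : Finset (Fin n)) : Set (Finset (Fin n)) :=
  {F | F ⊆ R ∧ F ∪ S ∈ Δ}

/-- `Δ` has dimension `d - 1`, i.e. `d` is the maximal cardinality of a face. -/
def IsDim (Δ : Set (Finset (Fin n))) (d : ℕ) : Prop :=
  (∀ F ∈ Δ, F.card ≤ d) ∧ ∃ F ∈ Δ, F.card = d

/-- `Δ` has frame dimension `c - 1`, i.e. `c` is the largest integer such that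
every `c`-subset of `[n]` is a face of `Δ`. -/
def IsFrame (Δ : Set (Finset (Fin n))) (c : ℕ) : Prop :=
  (∀ F : Finset (Fin n), F.card ≤ c → F ∈ Δ) ∧
    ∃ F : Finset (Fin n), F.card = c + 1 ∧ F ∉ Δ

/-- A facet: a maximal face. -/
def IsFacet (Δ : Set (Finset (Fin n))) (F : Finset (Fin n)) : Prop :=
  F ∈ Δ ∧ ∀ G ∈ Δ, F ⊆ G → F = G

open scoped Classical

noncomputable def insertSign (G : Finset (Fin n)) (x : Fin n) : k :=
  (-1) ^ #{y ∈ G | y < x}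

noncomputable def simplexBoundary : (Finset (Fin n) → k) →ₗ[k] Finset (Fin n) → k where
  toFun φ G := ∑ x, if x ∉ G then insertSign k G x * φ (insert x G) else 0
  map_add' φ ψ := by
    ext G
    simp only [Pi.add_apply, ← sum_add_distrib]
    refine sum_congr rfl fun x _ => ?_
    split_ifs <;> ring
  map_smul' c φ := by
    ext G
    simp only [Pi.smul_apply, smul_eq_mul, RingHom.id_apply, mul_sum]
    refine sum_congr rfl fun x _ => ?_
    split_ifs <;> ring

/-- The `p`-chains of `Γ`, modelled as functions on all of `Finset (Fin n)`. -/
def IsSupported (Γ : Set (Finset (Fin n))) (p : ℤ) (φ : Finset (Fin n) → k) : Prop :=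
  ∀ F, φ F ≠ 0 → F ∈ Γ ∧ (F.card : ℤ) = p + 1

def HomologyVanishes (Γ : Set (Finset (Fin n))) (p : ℤ) : Prop :=
  ∀ z, IsSupported k Γ p z → simplexBoundary k z = 0 →
    ∃ w, IsSupported k Γ (p + 1) w ∧ simplexBoundary k w = z

noncomputable def extendChain (Γ : Set (Finset (Fin n))) (p : ℤ) :
    Chains k Γ p →ₗ[k] Finset (Fin n) → k where
  toFun f F := if h : F ∈ Γ ∧ (F.card : ℤ) = p + 1 then f ⟨F, h⟩ else 0
  map_add' f g := by
    ext F
    simp only [Pi.add_apply]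
    split_ifs <;> simp
  map_smul' c f := by
    ext F
    simp only [Pi.smul_apply, smul_eq_mul, RingHom.id_apply]
    split_ifs <;> simp

variable {k}

section Sign

lemma insertSign_mul_self (G : Finset (Fin n)) (x : Fin n) :
    insertSign k G x * insertSign k G x = 1 := by
  rw [insertSign, ← mul_pow, neg_one_mul, neg_neg, one_pow]

lemma insertSign_ne_zero (G : Finset (Fin n)) (x : Fin n) : insertSign k G x ≠ 0 :=
  pow_ne_zero _ (neg_ne_zero.2 one_ne_zero)

lemma insertSign_empty (x : Fin n) : insertSign k ∅ x = 1 := by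
  simp [insertSign]

lemma insertSign_insert {G : Finset (Fin n)} {x : Fin n} (hx : x ∉ G) (y : Fin n) :
    insertSign k (insert x G) y = (if x < y then -1 else 1) * insertSign k G y := by
  rw [insertSign, insertSign, filter_insert]
  split_ifs with h
  · rw [card_insert_of_notMem (fun hc => hx (mem_filter.1 hc).1), pow_succ]
    ring
  · rw [one_mul]

lemma insertSign_singleton_add_insertSign_singleton {x y : Fin n} (hxy : x ≠ y) :
    insertSign k {x} y + insertSign k {y} x = 0 := by
  rcases hxy.lt_or_gt with h | h <;> simp [insertSign, filter_singleton, h, h.not_gt]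

lemma insertSign_insert_mul_insertSign_insert {G : Finset (Fin n)} {x y : Fin n} (hxy : x ≠ y)
    (hx : x ∉ G) (hy : y ∉ G) :
    insertSign k (insert x G) y * insertSign k (insert y G) x =
      -(insertSign k G x * insertSign k G y) := by
  rw [insertSign_insert hx y, insertSign_insert hy x]
  rcases hxy.lt_or_gt with h | h
  · rw [if_pos h, if_neg (asymm h)]; ring
  · rw [if_neg (asymm h), if_pos h]; ring

end Sign

section Chains

variable {Γ : Set (Finset (Fin n))} {p : ℤ}

lemma simplexBoundary_apply (φ : Finset (Fin n) → k) (G : Finset (Fin n)) :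
    simplexBoundary k φ G = ∑ x, if x ∉ G then insertSign k G x * φ (insert x G) else 0 :=
  rfl

lemma IsSupported.add {φ ψ : Finset (Fin n) → k} (hφ : IsSupported k Γ p φ)
    (hψ : IsSupported k Γ p ψ) : IsSupported k Γ p (φ + ψ) := fun F hF =>
  if h : φ F = 0 then hψ F (by simpa [h] using hF) else hφ F h

lemma IsSupported.smul {φ : Finset (Fin n) → k} (hφ : IsSupported k Γ p φ) (c : k) :
    IsSupported k Γ p (c • φ) := fun F hF => hφ F (right_ne_zero_of_mul hF)

lemma IsSupported.sub {φ ψ : Finset (Fin n) → k} (hφ : IsSupported k Γ p φ)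
    (hψ : IsSupported k Γ p ψ) : IsSupported k Γ p (φ - ψ) := by
  simpa [sub_eq_add_neg] using hφ.add (hψ.smul (-1))

lemma extendChain_apply_coe (f : Chains k Γ p) (F : {F // F ∈ Γ ∧ (F.card : ℤ) = p + 1}) :
    extendChain k Γ p f F = f F :=
  dif_pos F.2

lemma isSupported_extendChain (f : Chains k Γ p) : IsSupported k Γ p (extendChain k Γ p f) :=
  fun F hF => by
    by_contra h
    exact hF (dif_neg h)

lemma extendChain_injective : Function.Injective (extendChain k Γ p) := fun f g h =>
  funext fun F => by simpa only [extendChain_apply_coe] using congrFun h F.1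

lemma extendChain_restrict {φ : Finset (Fin n) → k} (hφ : IsSupported k Γ p φ) :
    extendChain k Γ p (fun F => φ F.1) = φ := by
  ext F
  by_cases h : F ∈ Γ ∧ (F.card : ℤ) = p + 1
  · exact extendChain_apply_coe _ ⟨F, h⟩
  · rw [show extendChain k Γ p _ F = 0 from dif_neg h]
    by_contra hF
    exact h (hφ F (Ne.symm hF))

lemma extendChain_chainsCongr {q : ℤ} (h : p = q) (f : Chains k Γ p) :
    extendChain k Γ q (chainsCongr k Γ h f) = extendChain k Γ p f := by
  subst h
  rfl

lemma simplexBoundary_extendChain (hΓ : IsComplex Γ) (f : Chains k Γ p) :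
    simplexBoundary k (extendChain k Γ p f) = extendChain k Γ (p - 1) (boundary k Γ p f) := by
  ext G
  rw [simplexBoundary_apply]
  by_cases hG : G ∈ Γ ∧ (G.card : ℤ) = p - 1 + 1
  · rw [extendChain_apply_coe _ ⟨G, hG⟩]
    refine sum_congr rfl fun x _ => ?_
    by_cases hx : x ∉ G
    · by_cases hi : insert x G ∈ Γ
      · have hcard : ((insert x G).card : ℤ) = p + 1 := by
          rw [card_insert_of_notMem hx]
          push_cast
          omega
        rw [if_pos hx, dif_pos ⟨hx, hi⟩, extendChain_apply_coe _ ⟨_, hi, hcard⟩]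
        rfl
      · rw [if_pos hx, dif_neg (fun h => hi h.2), show extendChain k Γ p f _ = 0 from
          dif_neg (fun h => hi h.1), mul_zero]
    · rw [if_neg hx, dif_neg (fun h => hx h.1)]
  · rw [show extendChain k Γ (p - 1) _ G = 0 from dif_neg hG]
    refine sum_eq_zero fun x _ => ?_
    by_cases hx : x ∉ G
    · rw [if_pos hx, show extendChain k Γ p f _ = 0 from dif_neg ?_, mul_zero]
      rintro ⟨hi, hc⟩
      refine hG ⟨hΓ _ hi _ (subset_insert x G), ?_⟩
      rw [card_insert_of_notMem hx] at hc
      push_cast at hc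
      omega
    · rw [if_neg hx]

lemma restrict_mem_cycles (hΓ : IsComplex Γ) {φ : Finset (Fin n) → k}
    (hφ : IsSupported k Γ p φ) (hφ' : simplexBoundary k φ = 0) :
    (fun F => φ F.1) ∈ cycles k Γ p := by
  refine LinearMap.mem_ker.2 (extendChain_injective ?_)
  rw [← simplexBoundary_extendChain hΓ, extendChain_restrict hφ, hφ', map_zero]

lemma homologyVanishes_iff_subsingleton (hΓ : IsComplex Γ) :
    HomologyVanishes k Γ p ↔ Subsingleton (ReducedHomology k Γ p) := by
  rw [Submodule.Quotient.subsingleton_iff, Submodule.eq_top_iff']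
  constructor
  · rintro hv ⟨f, hf⟩
    obtain ⟨w, hw, hwz⟩ := hv _ (isSupported_extendChain f)
      (by rw [simplexBoundary_extendChain hΓ, LinearMap.mem_ker.1 hf, map_zero])
    refine ⟨fun F => w F.1, extendChain_injective ?_⟩
    rw [LinearMap.comp_apply, LinearEquiv.coe_coe, extendChain_chainsCongr,
      ← simplexBoundary_extendChain hΓ, extendChain_restrict hw, hwz]
    rfl
  · intro h z hz hz'
    obtain ⟨g, hg⟩ := h ⟨_, restrict_mem_cycles hΓ hz hz'⟩
    refine ⟨extendChain k Γ (p + 1) g, isSupported_extendChain g, ?_⟩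
    rw [simplexBoundary_extendChain hΓ, ← extendChain_chainsCongr (show p + 1 - 1 = p by ring)]
    exact (congrArg _ hg).trans (extendChain_restrict hz)

lemma homologyVanishes_of_empty_notMem (hΓ : IsComplex Γ) (h : ∅ ∉ Γ) :
    HomologyVanishes k Γ p := by
  intro z hz _
  have hz0 : z = 0 := funext fun F => by
    by_contra hF
    exact h (hΓ F (hz F hF).1 ∅ (empty_subset F))
  exact ⟨0, fun F hF => absurd rfl hF, by rw [hz0, map_zero]⟩

lemma exists_ne_zero_of_equiv (hΓ : IsComplex Γ)
    (he : Nonempty (ReducedHomology k Γ p ≃ₗ[k] k)) :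
    ∃ ζ, IsSupported k Γ p ζ ∧ simplexBoundary k ζ = 0 ∧ ζ ≠ 0 := by
  obtain ⟨e⟩ := he
  obtain ⟨f, hf⟩ := Submodule.Quotient.mk_surjective _ (e.symm 1)
  refine ⟨extendChain k Γ p f.1, isSupported_extendChain _, ?_, fun h0 => ?_⟩
  · rw [simplexBoundary_extendChain hΓ, LinearMap.mem_ker.1 f.2, map_zero]
  · have hf0 : f = 0 := Subtype.ext (extendChain_injective (h0.trans (map_zero _).symm))
    rw [hf0, Submodule.Quotient.mk_zero, eq_comm, LinearEquiv.symm_apply_eq, map_zero] at hf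
    exact one_ne_zero hf

lemma exists_eq_smul_of_equiv (hΓ : IsComplex Γ)
    (he : Nonempty (ReducedHomology k Γ p ≃ₗ[k] k)) (htop : ∀ F ∈ Γ, (F.card : ℤ) ≠ p + 2)
    {u η : Finset (Fin n) → k} (hu : IsSupported k Γ p u) (hu' : simplexBoundary k u = 0)
    (hη : IsSupported k Γ p η) (hη' : simplexBoundary k η = 0) (hη0 : η ≠ 0) :
    ∃ c : k, u = c • η := by
  obtain ⟨e⟩ := he
  have hbot : Submodule.comap (cycles k Γ p).subtype (boundaries k Γ p) = ⊥ := by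
    have : Subsingleton (Chains k Γ (p + 1)) :=
      ⟨fun a b => funext fun F => absurd F.2.2 (by have := htop F.1 F.2.1; omega)⟩
    rw [boundaries, LinearMap.range_eq_bot.2 (Subsingleton.elim _ 0), Submodule.comap_bot,
      Submodule.ker_subtype]
  have hrank : Module.finrank k (cycles k Γ p) = 1 := by
    rw [((Submodule.quotEquivOfEqBot _ hbot).symm.trans e).finrank_eq, Module.finrank_self]
  have hη0' : (⟨_, restrict_mem_cycles hΓ hη hη'⟩ : cycles k Γ p) ≠ 0 := fun h => hη0 <| by
    have h' : (fun F : {F // F ∈ Γ ∧ (F.card : ℤ) = p + 1} => η F.1) = 0 :=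
      congrArg Subtype.val h
    rw [← extendChain_restrict hη, h', map_zero]
  obtain ⟨c, hc⟩ := (finrank_eq_one_iff_of_nonzero' _ hη0').1 hrank
    ⟨_, restrict_mem_cycles hΓ hu hu'⟩
  refine ⟨c, ?_⟩
  rw [← extendChain_restrict hu, ← extendChain_restrict hη, ← map_smul]
  exact congrArg _ (congrArg Subtype.val hc).symm

end Chains

section Vertex

variable (k) in
noncomputable def contract (x : Fin n) : (Finset (Fin n) → k) →ₗ[k] Finset (Fin n) → k where
  toFun φ G := if x ∈ G then 0 else insertSign k G x * φ (insert x G)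
  map_add' φ ψ := by
    ext G
    simp only [Pi.add_apply]
    split_ifs <;> ring
  map_smul' c φ := by
    ext G
    simp only [Pi.smul_apply, smul_eq_mul, RingHom.id_apply]
    split_ifs <;> ring

variable (k) in
noncomputable def cone (x : Fin n) : (Finset (Fin n) → k) →ₗ[k] Finset (Fin n) → k where
  toFun v F := if x ∈ F then insertSign k (F.erase x) x * v (F.erase x) else 0
  map_add' v w := by
    ext F
    simp only [Pi.add_apply]
    split_ifs <;> ring
  map_smul' c v := by
    ext F
    simp only [Pi.smul_apply, smul_eq_mul, RingHom.id_apply]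
    split_ifs <;> ring

def Avoids (x : Fin n) (φ : Finset (Fin n) → k) : Prop :=
  ∀ F, x ∈ F → φ F = 0

variable {x : Fin n} {φ v : Finset (Fin n) → k} {F G : Finset (Fin n)}

lemma contract_apply_of_mem (φ : Finset (Fin n) → k) (h : x ∈ G) : contract k x φ G = 0 :=
  if_pos h

lemma contract_apply_of_notMem (φ : Finset (Fin n) → k) (h : x ∉ G) :
    contract k x φ G = insertSign k G x * φ (insert x G) :=
  if_neg h

lemma cone_apply_of_mem (v : Finset (Fin n) → k) (h : x ∈ F) :
    cone k x v F = insertSign k (F.erase x) x * v (F.erase x) :=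
  if_pos h

lemma cone_apply_of_notMem (v : Finset (Fin n) → k) (h : x ∉ F) : cone k x v F = 0 :=
  if_neg h

lemma avoids_contract (φ : Finset (Fin n) → k) : Avoids x (contract k x φ) :=
  fun _ => contract_apply_of_mem φ

lemma Avoids.simplexBoundary (h : Avoids x φ) : Avoids x (simplexBoundary k φ) :=
  fun F hF => (simplexBoundary_apply φ F).trans <| sum_eq_zero fun y _ => by
    by_cases hy : y ∉ F
    · rw [if_pos hy, h _ (mem_insert_of_mem hF), mul_zero]
    · rw [if_neg hy]

lemma Avoids.contract_eq_zero (h : Avoids x φ) : contract k x φ = 0 := by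
  ext G
  by_cases hG : x ∈ G
  · exact contract_apply_of_mem φ hG
  · rw [contract_apply_of_notMem φ hG, h _ (mem_insert_self x G), mul_zero]
    rfl

lemma cone_contract (φ : Finset (Fin n) → k) :
    cone k x (contract k x φ) = {F | x ∈ F}.indicator φ := by
  ext F
  by_cases h : x ∈ F
  · rw [cone_apply_of_mem _ h, contract_apply_of_notMem _ (notMem_erase x F), insert_erase h,
      ← mul_assoc, insertSign_mul_self, one_mul,
      Set.indicator_of_mem (show F ∈ {F | x ∈ F} from h)]
  · rw [cone_apply_of_notMem _ h, Set.indicator_of_notMem (show F ∉ {F | x ∈ F} from h)]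

lemma contract_cone (hv : Avoids x v) : contract k x (cone k x v) = v := by
  ext G
  by_cases h : x ∈ G
  · rw [contract_apply_of_mem _ h, hv G h]
  · rw [contract_apply_of_notMem _ h, cone_apply_of_mem _ (mem_insert_self x G),
      erase_insert h, ← mul_assoc, insertSign_mul_self, one_mul]

lemma avoids_of_contract_eq_zero (h : contract k x φ = 0) : Avoids x φ := fun F hF => by
  have := congrFun (cone_contract (x := x) φ) F
  rwa [h, map_zero, Set.indicator_of_mem (show F ∈ {F | x ∈ F} from hF), eq_comm] at this

lemma contract_ne_zero (hx : x ∈ F) (hF : φ F ≠ 0) : contract k x φ ≠ 0 :=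
  fun h => hF (avoids_of_contract_eq_zero h F hx)

lemma simplexBoundary_cone (hv : Avoids x v) :
    simplexBoundary k (cone k x v) = v - cone k x (simplexBoundary k v) := by
  ext F
  rw [Pi.sub_apply, simplexBoundary_apply]
  by_cases hxF : x ∈ F
  · set E := F.erase x
    have hxE : x ∉ E := notMem_erase x F
    have hins : insert x E = F := insert_erase hxF
    rw [hv F hxF, cone_apply_of_mem _ hxF, simplexBoundary_apply, zero_sub, mul_sum,
      ← sum_neg_distrib]
    refine sum_congr rfl fun y _ => ?_
    by_cases hyF : y ∈ F
    · by_cases hyx : y = x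
      · subst hyx
        rw [if_neg (not_not.2 hyF), if_pos hxE, ← mul_assoc, insertSign_mul_self, one_mul,
          hins, hv F hxF, neg_zero]
      · rw [if_neg (not_not.2 hyF), if_neg (fun h => h (mem_erase.2 ⟨hyx, hyF⟩)), mul_zero,
          neg_zero]
    · have hyE : y ∉ E := fun h => hyF (mem_of_mem_erase h)
      have hyx : y ≠ x := fun h => hyF (h ▸ hxF)
      rw [if_pos hyF, if_pos hyE, cone_apply_of_mem _ (mem_insert_of_mem hxF),
        erase_insert_of_ne hyx]
      have hsign := insertSign_insert_mul_insertSign_insert (k := k) hyx.symm hxE hyE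
      rw [hins] at hsign
      linear_combination v (insert y E) * hsign
  · rw [cone_apply_of_notMem _ hxF, sub_zero, sum_eq_single x]
    · rw [if_pos hxF, cone_apply_of_mem _ (mem_insert_self x F), erase_insert hxF,
        ← mul_assoc, insertSign_mul_self, one_mul]
    · intro y _ hyx
      by_cases hyF : y ∈ F
      · rw [if_neg (not_not.2 hyF)]
      · rw [if_pos hyF, cone_apply_of_notMem _ (by simp [hxF, Ne.symm hyx]), mul_zero]
    · exact fun h => absurd (mem_univ x) h

lemma contract_simplexBoundary (φ : Finset (Fin n) → k) :
    contract k x (simplexBoundary k φ) = -simplexBoundary k (contract k x φ) := by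
  have hφ : φ = {F | x ∈ F}.indicator φ + {F | x ∈ F}ᶜ.indicator φ :=
    (Set.indicator_self_add_compl _ φ).symm
  have hout : Avoids x ({F | x ∈ F}ᶜ.indicator φ) := fun F hF =>
    Set.indicator_of_notMem (fun h : F ∈ {F | x ∈ F}ᶜ => h hF) φ
  conv_lhs => rw [hφ]
  rw [map_add, map_add, hout.simplexBoundary.contract_eq_zero, add_zero, ← cone_contract,
    simplexBoundary_cone (avoids_contract φ), map_sub,
    contract_cone (avoids_contract φ).simplexBoundary,
    (avoids_contract (x := x) φ).contract_eq_zero, zero_sub]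

end Vertex

section Faces

variable {Δ Γ : Set (Finset (Fin n))}

lemma isComplex_link (hΔ : IsComplex Δ) (S : Finset (Fin n)) : IsComplex (link Δ S) :=
  fun _ hF _ hG => ⟨hF.1.mono_left hG, hΔ _ hF.2 _ (union_subset_union hG subset_rfl)⟩

lemma isComplex_restrict (hΔ : IsComplex Δ) (R : Finset (Fin n)) : IsComplex (restrict Δ R) :=
  fun _ hF _ hG => ⟨hΔ _ hF.1 _ hG, hG.trans hF.2⟩

lemma link_empty (Δ : Set (Finset (Fin n))) : link Δ ∅ = Δ := by
  ext F
  simp [link]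

lemma restrict_univ (Δ : Set (Finset (Fin n))) : restrict Δ univ = Δ := by
  ext F
  simp [restrict]

lemma restrict_restrict (Δ : Set (Finset (Fin n))) (A B : Finset (Fin n)) :
    restrict (restrict Δ A) B = restrict Δ (A ∩ B) := by
  ext F
  simp [restrict, subset_inter_iff, and_assoc]

lemma restrict_compl_singleton_eq_self (hΓ : IsComplex Γ) {x : Fin n} (hx : {x} ∉ Γ) :
    restrict Γ {x}ᶜ = Γ := by
  ext F
  refine ⟨fun h => h.1, fun hF => ⟨hF, subset_compl_singleton.2 fun hxF => ?_⟩⟩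
  exact hx (hΓ F hF _ (singleton_subset_iff.2 hxF))

lemma link_link {S T : Finset (Fin n)} (h : Disjoint T S) :
    link (link Δ S) T = link Δ (T ∪ S) := by
  ext F
  simp only [link, Set.mem_ofPred_eq, disjoint_union_left, disjoint_union_right, union_assoc]
  tauto

lemma link_restrict_compl {R T : Finset (Fin n)} (h : Disjoint T R) :
    link (restrict Δ Rᶜ) T = restrict (link Δ T) Rᶜ := by
  ext F
  simp only [link, restrict, Set.mem_ofPred_eq, union_subset_iff,
    subset_compl_iff_disjoint_right.2 h, and_true]
  tauto

lemma link_subset_restrict_compl (hΔ : IsComplex Δ) (T : Finset (Fin n)) :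
    link Δ T ⊆ restrict Δ Tᶜ :=
  fun _ hF => ⟨hΔ _ hF.2 _ subset_union_left, subset_compl_iff_disjoint_right.2 hF.1⟩

lemma mem_link_singleton_iff {v : Fin n} {E : Finset (Fin n)} (hv : v ∉ E) :
    E ∈ link Δ {v} ↔ insert v E ∈ Δ := by
  rw [link, Set.mem_ofPred_eq, disjoint_singleton_right, union_comm, ← insert_eq]
  exact and_iff_right hv

end Faces

section Supports

variable {Γ Γ' : Set (Finset (Fin n))} {p : ℤ} {x : Fin n} {φ : Finset (Fin n) → k}

lemma IsSupported.mono (hφ : IsSupported k Γ p φ) (h : Γ ⊆ Γ') : IsSupported k Γ' p φ :=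
  fun F hF => ⟨h (hφ F hF).1, (hφ F hF).2⟩

lemma isSupported_restrict_compl_singleton_iff :
    IsSupported k (restrict Γ {x}ᶜ) p φ ↔ IsSupported k Γ p φ ∧ Avoids x φ := by
  refine ⟨fun h => ⟨h.mono fun F hF => hF.1, fun F hxF => ?_⟩, fun ⟨h, hx⟩ F hF => ?_⟩
  · by_contra hF
    exact subset_compl_singleton.1 (h F hF).1.2 hxF
  · exact ⟨⟨(h F hF).1, subset_compl_singleton.2 fun hxF => hF (hx F hxF)⟩, (h F hF).2⟩

lemma IsSupported.contract (hφ : IsSupported k Γ (p + 1) φ) :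
    IsSupported k (link Γ {x}) p (contract k x φ) := by
  intro G hG
  have hxG : x ∉ G := fun h => hG (contract_apply_of_mem φ h)
  rw [contract_apply_of_notMem φ hxG] at hG
  obtain ⟨hmem, hcard⟩ := hφ _ (right_ne_zero_of_mul hG)
  rw [card_insert_of_notMem hxG] at hcard
  exact ⟨(mem_link_singleton_iff hxG).2 hmem, by push_cast at hcard; omega⟩

lemma IsSupported.cone (hφ : IsSupported k (link Γ {x}) p φ) :
    IsSupported k Γ (p + 1) (cone k x φ) := by
  intro F hF
  have hxF : x ∈ F := by_contra fun h => hF (cone_apply_of_notMem φ h)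
  rw [cone_apply_of_mem φ hxF] at hF
  obtain ⟨hmem, hcard⟩ := hφ _ (right_ne_zero_of_mul hF)
  rw [mem_link_singleton_iff (notMem_erase x F), insert_erase hxF] at hmem
  rw [← card_erase_add_one hxF]
  exact ⟨hmem, by push_cast; omega⟩

end Supports

section Deletion

variable {Γ : Set (Finset (Fin n))} {p : ℤ} {x : Fin n}

variable (k) in
/-- The connecting map `H̃_{p+1}(Γ) → H̃_p(lk_Γ x)` is onto, at the level of cycles. -/
def LinkCyclesLift (Γ : Set (Finset (Fin n))) (x : Fin n) (p : ℤ) : Prop :=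
  ∀ u, IsSupported k (link Γ {x}) p u → simplexBoundary k u = 0 →
    ∃ ζ, IsSupported k Γ (p + 1) ζ ∧ simplexBoundary k ζ = 0 ∧ contract k x ζ = u

/-- If `z = ∂w` avoids `x`, then `contract w` is a cycle of the link; lifting it to a cycle `ζ`
of `Γ`, the chain `w - ζ` avoids `x` and still bounds `z`. -/
lemma HomologyVanishes.restrict_compl_singleton (hv : HomologyVanishes k Γ p)
    (hlift : LinkCyclesLift k Γ x p) : HomologyVanishes k (restrict Γ {x}ᶜ) p := by
  intro z hz hz'
  obtain ⟨hzΓ, hzx⟩ := isSupported_restrict_compl_singleton_iff.1 hz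
  obtain ⟨w, hw, rfl⟩ := hv z hzΓ hz'
  have hu : simplexBoundary k (contract k x w) = 0 := by
    rw [← neg_eq_zero, ← contract_simplexBoundary, hzx.contract_eq_zero]
  obtain ⟨ζ, hζ, hζ', hζw⟩ := hlift _ hw.contract hu
  refine ⟨w - ζ, isSupported_restrict_compl_singleton_iff.2 ⟨hw.sub hζ, ?_⟩, ?_⟩
  · exact avoids_of_contract_eq_zero (by rw [map_sub, hζw, sub_self])
  · rw [map_sub, hζ', sub_zero]

/-- A cycle `u = ∂v` of the link lifts to `cone x u - v`, a cycle of `Γ` by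
`simplexBoundary_cone`. -/
lemma linkCyclesLift_of_homologyVanishes (hΓ : IsComplex Γ)
    (hlk : HomologyVanishes k (link Γ {x}) p) : LinkCyclesLift k Γ x p := by
  intro u hu hu'
  obtain ⟨v, hv, rfl⟩ := hlk u hu hu'
  have hvx : Avoids x v := fun F hxF => by
    by_contra h
    exact disjoint_singleton_right.1 (hv F h).1.1 hxF
  refine ⟨cone k x (simplexBoundary k v) - v, ?_, ?_, ?_⟩
  · exact hu.cone.sub (hv.mono fun F hF => (link_subset_restrict_compl hΓ _ hF).1)
  · rw [map_sub, simplexBoundary_cone hvx.simplexBoundary, hu', map_zero, sub_zero, sub_self]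
  · rw [map_sub, contract_cone hvx.simplexBoundary, hvx.contract_eq_zero, sub_zero]

end Deletion

section Connectivity

variable {Γ : Set (Finset (Fin n))}

lemma simplexBoundary_single_singleton (a : Fin n) (c : k) :
    simplexBoundary k (Pi.single {a} c) = Pi.single ∅ c := by
  ext G
  rw [simplexBoundary_apply]
  by_cases hG : G = ∅
  · subst hG
    rw [sum_eq_single a (fun y _ hya => by simp [hya]) (by simp)]
    simp [insertSign_empty]
  · refine (sum_eq_zero fun y _ => ?_).trans (Pi.single_eq_of_ne (M := fun _ => k) hG c).symm
    by_cases hy : y ∉ G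
    · have hcard : (insert y G).card ≠ ({a} : Finset (Fin n)).card := by
        rw [card_insert_of_notMem hy, card_singleton]
        exact fun h => hG (card_eq_zero.1 (by omega))
      rw [if_pos hy, Pi.single_eq_of_ne (fun h => hcard (congrArg card h)), mul_zero]
    · rw [if_neg hy]

lemma sum_mul_simplexBoundary_singleton_eq_zero {r : Fin n → k} {ψ : Finset (Fin n) → k}
    (hr : ∀ u w, ψ {u, w} ≠ 0 → r u = r w) :
    ∑ v, r v * simplexBoundary k ψ {v} = 0 := by
  simp only [simplexBoundary_apply, mul_sum, ← sum_product']
  refine sum_involution (fun q _ => (q.2, q.1)) (fun ⟨v, y⟩ _ => ?_) (fun ⟨v, y⟩ _ hne => ?_)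
    (fun _ _ => mem_univ _) (fun _ _ => rfl)
  · dsimp only
    by_cases hvy : v = y
    · subst hvy
      simp
    have hyv : y ∉ ({v} : Finset (Fin n)) := by simpa [eq_comm] using hvy
    have hvy' : v ∉ ({y} : Finset (Fin n)) := by simpa using hvy
    have hsign := insertSign_singleton_add_insertSign_singleton (k := k) hvy
    rw [if_pos hyv, if_pos hvy', pair_comm v y]
    by_cases hψ : ψ {y, v} = 0
    · rw [hψ]
      ring
    · rw [hr y v hψ]
      linear_combination r v * ψ {y, v} * hsign
  · rintro h
    obtain rfl : y = v := congrArg Prod.fst h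
    simp at hne

variable (k) in
noncomputable def pairChain (a b : Fin n) : Finset (Fin n) → k :=
  Pi.single {a} 1 - Pi.single {b} 1

lemma isSupported_pairChain {a b : Fin n} (ha : {a} ∈ Γ) (hb : {b} ∈ Γ) :
    IsSupported k Γ 0 (pairChain k a b) := by
  intro F hF
  by_cases h : F = {a}
  · subst h
    simpa using ha
  · by_cases h' : F = {b}
    · subst h'
      simpa using hb
    · simp [pairChain, h, h'] at hF

lemma simplexBoundary_pairChain (a b : Fin n) : simplexBoundary k (pairChain k a b) = 0 := by
  simp [pairChain, simplexBoundary_single_singleton]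

lemma reflTransGen_of_homologyVanishes_zero (hv : HomologyVanishes k Γ 0) {a b : Fin n}
    (ha : {a} ∈ Γ) (hb : {b} ∈ Γ) :
    Relation.ReflTransGen (fun u w => {u, w} ∈ Γ) a b := by
  by_contra hab
  obtain ⟨ψ, hψ, hψz⟩ :=
    hv _ (isSupported_pairChain (k := k) ha hb) (simplexBoundary_pairChain a b)
  set r : Fin n → k := fun v => if Relation.ReflTransGen (fun u w => {u, w} ∈ Γ) a v then 1 else 0
  have hr : ∀ u w, ψ {u, w} ≠ 0 → r u = r w := by
    intro u w h
    have huw := (hψ _ h).1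
    have hwu : {w, u} ∈ Γ := pair_comm u w ▸ huw
    simp only [r]
    congr 1
    exact propext ⟨fun h => h.tail huw, fun h => h.tail hwu⟩
  have := sum_mul_simplexBoundary_singleton_eq_zero hr
  rw [hψz] at this
  simp [pairChain, r, Pi.single_apply, mul_sub, sum_sub_distrib, hab] at this
  exact this Relation.ReflTransGen.refl

end Connectivity

variable (k) in
def IsGorensteinStar (Δ : Set (Finset (Fin n))) (d : ℕ) : Prop :=
  ∀ S ∈ Δ, ∀ p : ℤ,
    (p + S.card = (d : ℤ) - 1 → Nonempty (ReducedHomology k (link Δ S) p ≃ₗ[k] k)) ∧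
    (p + S.card ≠ (d : ℤ) - 1 → Subsingleton (ReducedHomology k (link Δ S) p))

def RidgeAdj (Γ : Set (Finset (Fin n))) (d : ℕ) (F F' : Finset (Fin n)) : Prop :=
  F ∈ Γ ∧ F' ∈ Γ ∧ F.card = d ∧ F'.card = d ∧ (F ∩ F').card + 1 = d

lemma RidgeAdj.insert {Δ : Set (Finset (Fin n))} {v : Fin n} {c : ℕ} {E E' : Finset (Fin n)}
    (h : RidgeAdj (link Δ {v}) c E E') : RidgeAdj Δ (c + 1) (insert v E) (insert v E') := by
  obtain ⟨hE, hE', hEc, hE'c, hc⟩ := h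
  have hvE : v ∉ E := disjoint_singleton_right.1 hE.1
  have hvE' : v ∉ E' := disjoint_singleton_right.1 hE'.1
  refine ⟨(mem_link_singleton_iff hvE).1 hE, (mem_link_singleton_iff hvE').1 hE', ?_, ?_, ?_⟩
  · rw [card_insert_of_notMem hvE, hEc]
  · rw [card_insert_of_notMem hvE', hE'c]
  · rw [← insert_inter_distrib, card_insert_of_notMem fun h => hvE (mem_inter.1 h).1, hc]

namespace IsGorensteinStar

variable {Δ : Set (Finset (Fin n))} {d : ℕ} {p : ℤ}

lemma homologyVanishes_link (hΔ : IsComplex Δ) (hG : IsGorensteinStar k Δ d)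
    {S : Finset (Fin n)} (hS : S ∈ Δ) (hp : p + S.card ≠ (d : ℤ) - 1) :
    HomologyVanishes k (link Δ S) p :=
  (homologyVanishes_iff_subsingleton (isComplex_link hΔ S)).2 ((hG S hS p).2 hp)

lemma homologyVanishes (hΔ : IsComplex Δ) (hG : IsGorensteinStar k Δ d)
    (hp : p ≠ (d : ℤ) - 1) : HomologyVanishes k Δ p := by
  by_cases h : ∅ ∈ Δ
  · simpa only [link_empty] using hG.homologyVanishes_link hΔ h (by simpa using hp)
  · exact homologyVanishes_of_empty_notMem hΔ h

lemma exists_ne_zero_cycle (hΔ : IsComplex Δ) (hG : IsGorensteinStar k Δ d) (h : ∅ ∈ Δ)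
    (hp : p + 1 = d) : ∃ ζ, IsSupported k Δ p ζ ∧ simplexBoundary k ζ = 0 ∧ ζ ≠ 0 := by
  have := exists_ne_zero_of_equiv (isComplex_link hΔ ∅) ((hG ∅ h p).1 (by simp; omega))
  rwa [link_empty] at this

lemma exists_superset_card_eq (hΔ : IsComplex Δ) (hG : IsGorensteinStar k Δ d)
    {S : Finset (Fin n)} (hS : S ∈ Δ) : ∃ F ∈ Δ, S ⊆ F ∧ F.card = d := by
  obtain ⟨ζ, hζ, -, hζ0⟩ := exists_ne_zero_of_equiv (isComplex_link hΔ S)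
    ((hG S hS ((d : ℤ) - 1 - S.card)).1 (by ring))
  obtain ⟨G, hG⟩ := Function.ne_iff.1 hζ0
  obtain ⟨⟨hGS, hGm⟩, hGc⟩ := hζ G hG
  refine ⟨G ∪ S, hGm, subset_union_right, ?_⟩
  rw [card_union_of_disjoint hGS]
  omega

lemma card_le (hΔ : IsComplex Δ) (hG : IsGorensteinStar k Δ d) {S : Finset (Fin n)}
    (hS : S ∈ Δ) : S.card ≤ d := by
  obtain ⟨F, -, hSF, hF⟩ := hG.exists_superset_card_eq hΔ hS
  exact hF ▸ card_le_card hSF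

protected lemma link (hΔ : IsComplex Δ) (hG : IsGorensteinStar k Δ d) {S : Finset (Fin n)}
    (hS : S ∈ Δ) : IsGorensteinStar k (link Δ S) (d - S.card) := by
  intro T hT p
  have hcard : ((T ∪ S).card : ℤ) = T.card + S.card := by
    rw [card_union_of_disjoint hT.1]
    push_cast
    rfl
  have hd : ((d - S.card : ℕ) : ℤ) = d - S.card := Nat.cast_sub (hG.card_le hΔ hS)
  rw [link_link hT.1, hd]
  obtain ⟨h₁, h₂⟩ := hG _ hT.2 p
  exact ⟨fun h => h₁ (by omega), fun h => h₂ (by omega)⟩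

lemma exists_eq_smul (hΔ : IsComplex Δ) (hG : IsGorensteinStar k Δ d) (h : ∅ ∈ Δ)
    (hp : p + 1 = d) {u η : Finset (Fin n) → k} (hu : IsSupported k Δ p u)
    (hu' : simplexBoundary k u = 0) (hη : IsSupported k Δ p η)
    (hη' : simplexBoundary k η = 0) (hη0 : η ≠ 0) : ∃ c : k, u = c • η := by
  have he := (hG ∅ h p).1 (by simp; omega)
  rw [link_empty] at he
  refine exists_eq_smul_of_equiv hΔ he (fun F hF => ?_) hu hu' hη hη' hη0
  have := hG.card_le hΔ hF
  omega

lemma eq_or_eq_of_vertex (hΔ : IsComplex Δ) (hG : IsGorensteinStar k Δ 1) {a b y : Fin n}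
    (hab : a ≠ b) (ha : {a} ∈ Δ) (hb : {b} ∈ Δ) (hy : {y} ∈ Δ) : y = a ∨ y = b := by
  by_contra! hya
  obtain ⟨c, hc⟩ := hG.exists_eq_smul hΔ (hΔ _ ha _ (empty_subset _)) (by simp)
    (isSupported_pairChain ha hy) (simplexBoundary_pairChain a y)
    (isSupported_pairChain ha hb) (simplexBoundary_pairChain a b)
    (fun h => by simpa [pairChain, Pi.single_apply, hab] using congrFun h {a})
  have := congrFun hc {y}
  simp [pairChain, hya.1, hya.2] at this

/-- The link of the ridge `F ∩ F'` is a Gorenstein* complex of dimension `0`, so the cycle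
condition at the ridge has only the two terms `F` and `F'`. -/
lemma ne_zero_of_ridgeAdj (hΔ : IsComplex Δ) (hG : IsGorensteinStar k Δ d)
    {ζ : Finset (Fin n) → k} (hζ : IsSupported k Δ p ζ) (hζ' : simplexBoundary k ζ = 0)
    {F F' : Finset (Fin n)} (hF : RidgeAdj Δ d F F') (hζF : ζ F ≠ 0) : ζ F' ≠ 0 := by
  obtain ⟨hFm, hF'm, hFc, hF'c, hGc⟩ := hF
  set G := F ∩ F'
  obtain ⟨a, haG, hFa⟩ := (exists_eq_insert_iff (s := G) (t := F)).2
    ⟨inter_subset_left, by omega⟩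
  obtain ⟨b, hbG, hF'b⟩ := (exists_eq_insert_iff (s := G) (t := F')).2
    ⟨inter_subset_right, by omega⟩
  by_cases hab : a = b
  · rwa [← hF'b, ← hab, hFa]
  have hGm : G ∈ Δ := hΔ _ hFm G inter_subset_left
  have hlk : IsGorensteinStar k (link Δ G) 1 := by
    have := hG.link hΔ hGm
    rwa [show d - G.card = 1 by omega] at this
  have hvertex : ∀ y ∉ G, insert y G ∈ Δ → {y} ∈ link Δ G := fun y hy h =>
    ⟨disjoint_singleton_left.2 hy, by rwa [← insert_eq]⟩
  have hsum := congrFun hζ' G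
  rw [simplexBoundary_apply, Fintype.sum_eq_add a b hab, if_pos haG, if_pos hbG, hFa, hF'b] at hsum
  · intro h0
    rw [h0, mul_zero, add_zero] at hsum
    exact mul_ne_zero (insertSign_ne_zero _ _) hζF hsum
  · rintro y ⟨hya, hyb⟩
    by_cases hy : y ∉ G
    · rw [if_pos hy]
      by_contra h
      rcases eq_or_eq_of_vertex (isComplex_link hΔ G) hlk hab (hvertex a haG (hFa ▸ hFm))
        (hvertex b hbG (hF'b ▸ hF'm)) (hvertex y hy (hζ _ (right_ne_zero_of_mul h)).1)
        with h | h <;> contradiction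
    · rw [if_neg hy]

end IsGorensteinStar

namespace IsGorensteinStar

variable {Δ : Set (Finset (Fin n))} {d : ℕ} {p : ℤ}

lemma reflTransGen_ridgeAdj_of_mem {v : Fin n} {c : ℕ}
    (hlk : ∀ E ∈ link Δ {v}, ∀ E' ∈ link Δ {v}, E.card = c → E'.card = c →
      Relation.ReflTransGen (RidgeAdj (link Δ {v}) c) E E')
    {F F' : Finset (Fin n)} (hF : F ∈ Δ) (hF' : F' ∈ Δ) (hFc : F.card = c + 1)
    (hF'c : F'.card = c + 1) (hvF : v ∈ F) (hvF' : v ∈ F') :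
    Relation.ReflTransGen (RidgeAdj Δ (c + 1)) F F' := by
  have hmem : ∀ {E}, E ∈ Δ → v ∈ E → E.erase v ∈ link Δ {v} := fun hE hvE =>
    (mem_link_singleton_iff (notMem_erase v _)).2 (by rwa [insert_erase hvE])
  have hpath := hlk _ (hmem hF hvF) _ (hmem hF' hvF') (by rw [card_erase_of_mem hvF, hFc]; rfl)
    (by rw [card_erase_of_mem hvF', hF'c]; rfl)
  have : Relation.ReflTransGen (RidgeAdj Δ (c + 1)) (insert v (F.erase v))
      (insert v (F'.erase v)) := hpath.lift (insert v) fun _ _ h => h.insert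
  rwa [insert_erase hvF, insert_erase hvF'] at this

/-- Vertices are joined by edge paths since `H̃_0(Δ) = 0`, and each edge lies in a facet. -/
lemma reflTransGen_ridgeAdj_of_forall_mem (hΔ : IsComplex Δ) (hG : IsGorensteinStar k Δ d)
    (hd : 2 ≤ d) (hcommon : ∀ v {E E'}, E ∈ Δ → E' ∈ Δ → E.card = d → E'.card = d → v ∈ E →
      v ∈ E' → Relation.ReflTransGen (RidgeAdj Δ d) E E')
    {F F' : Finset (Fin n)} (hF : F ∈ Δ) (hF' : F' ∈ Δ) (hFc : F.card = d)
    (hF'c : F'.card = d) : Relation.ReflTransGen (RidgeAdj Δ d) F F' := by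
  obtain ⟨a, haF⟩ := card_pos.1 (by omega : 0 < F.card)
  obtain ⟨b, hbF'⟩ := card_pos.1 (by omega : 0 < F'.card)
  have hedges := reflTransGen_of_homologyVanishes_zero (hG.homologyVanishes hΔ (by omega))
    (hΔ _ hF _ (singleton_subset_iff.2 haF)) (hΔ _ hF' _ (singleton_subset_iff.2 hbF'))
  suffices ∀ u, Relation.ReflTransGen (fun u w => {u, w} ∈ Δ) u b →
      ∀ E ∈ Δ, E.card = d → u ∈ E → Relation.ReflTransGen (RidgeAdj Δ d) E F' from
    this a hedges F hF hFc haF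
  intro u hu
  induction hu using Relation.ReflTransGen.head_induction_on with
  | refl => exact fun E hE hEc hbE => hcommon b hE hF' hEc hF'c hbE hbF'
  | head hedge _ ih =>
    intro E hE hEc huE
    obtain ⟨E₁, hE₁, hsub, hE₁c⟩ := hG.exists_superset_card_eq hΔ hedge
    exact (hcommon _ hE hE₁ hEc hE₁c huE (hsub (mem_insert_self _ _))).trans
      (ih E₁ hE₁ hE₁c (hsub (mem_insert_of_mem (mem_singleton_self _))))

theorem reflTransGen_ridgeAdj (hΔ : IsComplex Δ) (hG : IsGorensteinStar k Δ d)
    {F F' : Finset (Fin n)} (hF : F ∈ Δ) (hF' : F' ∈ Δ) (hFc : F.card = d)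
    (hF'c : F'.card = d) : Relation.ReflTransGen (RidgeAdj Δ d) F F' := by
  induction d generalizing Δ F F' with
  | zero => rw [card_eq_zero.1 hFc, card_eq_zero.1 hF'c]
  | succ c ih =>
    by_cases hFF : F = F'
    · exact hFF ▸ .refl
    rcases Nat.lt_or_ge c 1 with hc | hc
    · refine .single ⟨hF, hF', hFc, hF'c, ?_⟩
      have : (F ∩ F').card < F.card := card_lt_card ⟨inter_subset_left, fun h =>
        hFF (eq_of_subset_of_card_le (h.trans inter_subset_right) (by omega))⟩
      omega
    refine hG.reflTransGen_ridgeAdj_of_forall_mem hΔ (by omega) (fun v E E' hE hE' hEc hE'c hvE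
      hvE' => ?_) hF hF' hFc hF'c
    have hv : {v} ∈ Δ := hΔ _ hE _ (singleton_subset_iff.2 hvE)
    have hlk : IsGorensteinStar k (link Δ {v}) c := by simpa using hG.link hΔ hv
    exact reflTransGen_ridgeAdj_of_mem (fun _ h₁ _ h₂ => ih (isComplex_link hΔ _) hlk h₁ h₂)
      hE hE' hEc hE'c hvE hvE'

lemma exists_mem_ne_zero (hΔ : IsComplex Δ) (hG : IsGorensteinStar k Δ d)
    {ζ : Finset (Fin n) → k} (hζ : IsSupported k Δ p ζ) (hp : p + 1 = d)
    (hζ' : simplexBoundary k ζ = 0) (hζ0 : ζ ≠ 0) {x : Fin n} (hx : {x} ∈ Δ) :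
    ∃ F, x ∈ F ∧ ζ F ≠ 0 := by
  obtain ⟨F₀, hF₀⟩ := Function.ne_iff.1 hζ0
  obtain ⟨hF₀m, hF₀c⟩ := hζ F₀ hF₀
  obtain ⟨F₁, hF₁m, hxF₁, hF₁c⟩ := hG.exists_superset_card_eq hΔ hx
  have hpath := hG.reflTransGen_ridgeAdj hΔ hF₀m hF₁m (by omega) hF₁c
  refine ⟨F₁, singleton_subset_iff.1 hxF₁, ?_⟩
  clear hF₁m hxF₁ hF₁c
  induction hpath with
  | refl => exact hF₀
  | tail _ hadj ih => exact hG.ne_zero_of_ridgeAdj hΔ hζ hζ' hadj ih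

/-- A nonzero top cycle `ζ` passes through `x`, so its contraction spans the top homology of
`lk x`: every top cycle of the link lifts. -/
lemma homologyVanishes_restrict_compl_singleton (hΔ : IsComplex Δ)
    (hG : IsGorensteinStar k Δ d) (hp : p + 2 = d) (x : Fin n) :
    HomologyVanishes k (restrict Δ {x}ᶜ) p := by
  have hv := hG.homologyVanishes hΔ (p := p) (by omega)
  by_cases hx : {x} ∈ Δ
  swap
  · rwa [restrict_compl_singleton_eq_self hΔ hx]
  obtain ⟨ζ, hζ, hζ', hζ0⟩ :=
    hG.exists_ne_zero_cycle hΔ (hΔ _ hx _ (empty_subset _)) (p := p + 1) (by omega)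
  obtain ⟨F, hxF, hζF⟩ := hG.exists_mem_ne_zero hΔ hζ (by omega) hζ' hζ0 hx
  have hlk : IsGorensteinStar k (link Δ {x}) (d - 1) := by simpa using hG.link hΔ hx
  have hd : 1 ≤ d := by simpa using hG.card_le hΔ hx
  refine hv.restrict_compl_singleton fun u hu hu' => ?_
  obtain ⟨c, rfl⟩ := hlk.exists_eq_smul (p := p) (isComplex_link hΔ _)
    ((mem_link_singleton_iff (notMem_empty x)).2 (by simpa using hx)) (by omega) hu hu'
    hζ.contract (by rw [← neg_eq_zero, ← contract_simplexBoundary, hζ', map_zero])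
    (contract_ne_zero hxF hζF)
  exact ⟨c • ζ, hζ.smul c, by rw [map_smul, hζ', smul_zero], map_smul _ _ _⟩

theorem homologyVanishes_restrict_compl (hΔ : IsComplex Δ) (hG : IsGorensteinStar k Δ d)
    (R : Finset (Fin n))
    (h : p + R.card ≤ (d : ℤ) - 2 ∨ (p + R.card = (d : ℤ) - 1 ∧ R.Nonempty)) :
    HomologyVanishes k (restrict Δ Rᶜ) p := by
  induction R using Finset.induction_on generalizing Δ d with
  | empty =>
    rw [compl_empty, restrict_univ]
    refine hG.homologyVanishes hΔ ?_
    rcases h with h | ⟨-, h⟩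
    · simp only [card_empty, Nat.cast_zero, add_zero] at h
      omega
    · exact absurd h (by simp)
  | insert x R hxR ih =>
    rw [card_insert_of_notMem hxR, Nat.cast_succ] at h
    rw [show (insert x R)ᶜ = Rᶜ ∩ {x}ᶜ by ext; simp [and_comm], ← restrict_restrict]
    have hΓ := isComplex_restrict hΔ Rᶜ
    have hv : HomologyVanishes k (restrict Δ Rᶜ) p := ih hΔ hG (Or.inl (by omega))
    by_cases hx : {x} ∈ restrict Δ Rᶜ
    swap
    · rwa [restrict_compl_singleton_eq_self hΓ hx]
    by_cases hhard : R = ∅ ∧ p + 2 = d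
    · obtain ⟨rfl, hp⟩ := hhard
      rw [compl_empty, restrict_univ]
      exact hG.homologyVanishes_restrict_compl_singleton hΔ hp x
    have hlk : HomologyVanishes k (link (restrict Δ Rᶜ) {x}) p := by
      have hd := hG.card_le hΔ hx.1
      rw [card_singleton] at hd
      rw [link_restrict_compl (disjoint_singleton_left.2 hxR)]
      refine ih (isComplex_link hΔ _) (hG.link hΔ hx.1) ?_
      rw [card_singleton, Nat.cast_sub hd, Nat.cast_one]
      rcases h with h | h
      · exact Or.inl (by omega)
      · refine Or.inr ⟨by omega, nonempty_iff_ne_empty.2 fun hR => hhard ⟨hR, ?_⟩⟩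
        subst hR
        simp only [card_empty, Nat.cast_zero] at h
        omega
    exact hv.restrict_compl_singleton (linkCyclesLift_of_homologyVanishes hΓ hlk)

end IsGorensteinStar

theorem stmt19_general (k : Type) [Field k] {n : ℕ} (Δ : Set (Finset (Fin n)))
    (hΔ : IsComplex Δ) (d : ℕ)
    (hGor : ∀ S ∈ Δ, ∀ p : ℤ,
      (p + S.card = (d : ℤ) - 1 →
        Nonempty (ReducedHomology k (link Δ S) p ≃ₗ[k] k)) ∧
      (p + S.card ≠ (d : ℤ) - 1 →
        Subsingleton (ReducedHomology k (link Δ S) p))) :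
    ∀ (p : ℤ) (R : Finset (Fin n)), p + R.card = (d : ℤ) - 1 → p ≤ (d : ℤ) - 2 →
      Subsingleton (ReducedHomology k (restrict Δ Rᶜ) p) := by
  intro p R hpR hp
  have hR : R.Nonempty := card_pos.1 (by omega)
  exact (homologyVanishes_iff_subsingleton (isComplex_restrict hΔ _)).1
    (IsGorensteinStar.homologyVanishes_restrict_compl hΔ hGor R (Or.inr ⟨hpR, hR⟩))

/-- a Gorenstein* complex satisfies `H̃_p(Δ_{-R}) = 0` whenever
`p + |R| = d - 1` and `p ≤ d - 2`; in particular it is 2-Cohen-Macaulay. -/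
theorem stmt19 (k : Type) [Field k] {n : ℕ} (Δ : Set (Finset (Fin n)))
    (hΔ : IsComplex Δ) (d : ℕ) (hd : IsDim Δ d)
    (hGor : ∀ S ∈ Δ, ∀ p : ℤ,
      (p + S.card = (d : ℤ) - 1 →
        Nonempty (ReducedHomology k (link Δ S) p ≃ₗ[k] k)) ∧
      (p + S.card ≠ (d : ℤ) - 1 →
        Subsingleton (ReducedHomology k (link Δ S) p))) :
    ∀ (p : ℤ) (R : Finset (Fin n)), p + R.card = (d : ℤ) - 1 → p ≤ (d : ℤ) - 2 →
      Subsingleton (ReducedHomology k (restrict Δ Rᶜ) p) :=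
  stmt19_general k Δ hΔ d hGor

end SCx
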